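/- Let F₁ > 0, A > 1, F(x) = F₁ for 0 ≤ x < A and F(x) = 0 for x ≥ A, and let v ∈ C¹([0,1]) with v(x) ≥ 0 for all x ∈ [0,1]. If v'(x) ≥ F₁ / √(F₁ x + v(0)²) for all x ∈ [0,1], then there are no collisions on [0,∞). This condition is sufficient but not necessary. -/

import Mathlib

open Set

/-- Trajectory of the particle starting at `x` with initial velocity `v x ≥ 0`, moving with
constant acceleration `F₁ > 0` until its position first reaches `A`, and with constant
acceleration `F₂ ≥ 0` afterwards. -/
noncomputable def stepTraj (F₁ F₂ A : ℝ) (v : ℝ → ℝ) (x t : ℝ) : ℝ :=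
  let T := (-(v x) + Real.sqrt (v x ^ 2 + 2 * F₁ * (A - x))) / F₁
  if t ≤ T then x + v x * t + F₁ * t ^ 2 / 2
  else A + (v x + F₁ * T) * (t - T) + F₂ * (t - T) ^ 2 / 2

/-- Absence of collisions on `[0,∞)` for the one-gap system with `F₂ = 0`. -/
def noCollisionsFree (F₁ A : ℝ) (v : ℝ → ℝ) : Prop :=
  ∀ t, 0 ≤ t → ∀ x₁ ∈ Icc (0:ℝ) 1, ∀ x₂ ∈ Icc (0:ℝ) 1, x₁ ≠ x₂ →
    stepTraj F₁ 0 A v x₁ t ≠ stepTraj F₁ 0 A v x₂ t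

noncomputable def hitT (F₁ A : ℝ) (v : ℝ → ℝ) (x : ℝ) : ℝ :=
  (-(v x) + Real.sqrt (v x ^ 2 + 2 * F₁ * (A - x))) / F₁

noncomputable def wVel (F₁ A : ℝ) (v : ℝ → ℝ) (x : ℝ) : ℝ :=
  Real.sqrt (v x ^ 2 + 2 * F₁ * (A - x))

lemma stepTraj_eq (F₁ A : ℝ) (hF₁ : 0 < F₁) (v : ℝ → ℝ) (x t : ℝ) :
    stepTraj F₁ 0 A v x t =
      if t ≤ hitT F₁ A v x then x + v x * t + F₁ * t ^ 2 / 2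
      else A + wVel F₁ A v x * (t - hitT F₁ A v x) := by
  simp only [stepTraj, hitT, wVel]
  split_ifs with h
  · simp only [h, if_true]
  · have hF : F₁ ≠ 0 := ne_of_gt hF₁
    simp only [h, if_false]
    rw [mul_div_cancel₀ _ hF]
    ring

lemma key_lt (F₁ A : ℝ) (hF₁ : 0 < F₁) (hA : 1 < A) (v : ℝ → ℝ)
    (hv0 : ∀ x ∈ Icc (0:ℝ) 1, 0 ≤ v x)
    (hmono : ∀ x₁ ∈ Icc (0:ℝ) 1, ∀ x₂ ∈ Icc (0:ℝ) 1, x₁ ≤ x₂ → v x₁ ≤ v x₂)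
    (hg : ∀ x₁ ∈ Icc (0:ℝ) 1, ∀ x₂ ∈ Icc (0:ℝ) 1, x₁ ≤ x₂ →
        v x₁ ^ 2 - 2 * F₁ * x₁ ≤ v x₂ ^ 2 - 2 * F₁ * x₂)
    (t : ℝ) (ht : 0 ≤ t) (x₁ : ℝ) (hx₁ : x₁ ∈ Icc (0:ℝ) 1) (x₂ : ℝ)
    (hx₂ : x₂ ∈ Icc (0:ℝ) 1) (hlt : x₁ < x₂) :
    stepTraj F₁ 0 A v x₁ t < stepTraj F₁ 0 A v x₂ t := by
  have hF : F₁ ≠ 0 := ne_of_gt hF₁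
  -- basic facts
  have hq : ∀ x ∈ Icc (0:ℝ) 1, 0 < v x ^ 2 + 2 * F₁ * (A - x) := by
    intro x hx
    have hx1 : x ≤ 1 := hx.2
    nlinarith [sq_nonneg (v x)]
  have hwsq : ∀ x ∈ Icc (0:ℝ) 1, wVel F₁ A v x ^ 2 = v x ^ 2 + 2 * F₁ * (A - x) := by
    intro x hx; exact Real.sq_sqrt (hq x hx).le
  have hwpos : ∀ x ∈ Icc (0:ℝ) 1, 0 < wVel F₁ A v x := by
    intro x hx; exact Real.sqrt_pos.2 (hq x hx)
  have hvw : ∀ x ∈ Icc (0:ℝ) 1, v x < wVel F₁ A v x := by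
    intro x hx
    have := hv0 x hx
    have hx1 : x ≤ 1 := hx.2
    refine (Real.lt_sqrt (hv0 x hx)).2 ?_
    nlinarith
  have hTdef : ∀ x, hitT F₁ A v x = (wVel F₁ A v x - v x) / F₁ := by
    intro x; simp only [hitT, wVel]; ring
  have hTpos : ∀ x ∈ Icc (0:ℝ) 1, 0 < hitT F₁ A v x := by
    intro x hx; rw [hTdef]
    exact div_pos (by linarith [hvw x hx]) hF₁
  have hreach : ∀ x ∈ Icc (0:ℝ) 1,
      x + v x * hitT F₁ A v x + F₁ * hitT F₁ A v x ^ 2 / 2 = A := by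
    intro x hx
    rw [hTdef]
    have h2 := hwsq x hx
    field_simp
    nlinarith [h2]
  have hwle : wVel F₁ A v x₁ ≤ wVel F₁ A v x₂ := by
    have := hg x₁ hx₁ x₂ hx₂ hlt.le
    apply Real.sqrt_le_sqrt
    linarith
  have hTlt : hitT F₁ A v x₂ < hitT F₁ A v x₁ := by
    by_contra hc
    push_neg at hc
    have h1 := hreach x₁ hx₁
    have h2 := hreach x₂ hx₂
    have hv12 := hmono x₁ hx₁ x₂ hx₂ hlt.le
    have ht1 := hTpos x₁ hx₁
    have ht2 := hTpos x₂ hx₂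
    have hvx1 := hv0 x₁ hx₁
    nlinarith [mul_nonneg hvx1 (sub_nonneg.2 hc),
      mul_nonneg (sub_nonneg.2 hc) (by linarith : (0:ℝ) ≤ hitT F₁ A v x₂ + hitT F₁ A v x₁)]
  rw [stepTraj_eq F₁ A hF₁, stepTraj_eq F₁ A hF₁]
  have hv12 := hmono x₁ hx₁ x₂ hx₂ hlt.le
  split_ifs with h1 h2 h2
  · nlinarith [mul_nonneg (sub_nonneg.2 hv12) ht]
  · -- t ≤ T₁, t > T₂ : LHS ≤ A < RHS
    push_neg at h2
    have hr1 := hreach x₁ hx₁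
    have hvx1 := hv0 x₁ hx₁
    have hw2 := hwpos x₂ hx₂
    have hT2 := hTpos x₂ hx₂
    nlinarith [mul_nonneg hvx1 (sub_nonneg.2 h1),
      mul_nonneg (sub_nonneg.2 h1) (by linarith : (0:ℝ) ≤ t + hitT F₁ A v x₁),
      mul_pos hw2 (by linarith : (0:ℝ) < t - hitT F₁ A v x₂)]
  · exact absurd (le_trans h2 hTlt.le) h1
  · push_neg at h1 h2
    have hw1 := hwpos x₁ hx₁
    nlinarith [mul_le_mul_of_nonneg_right hwle (by linarith : (0:ℝ) ≤ t - hitT F₁ A v x₂),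
      mul_pos hw1 (sub_pos.2 hTlt)]

lemma core (F₁ A : ℝ) (hF₁ : 0 < F₁) (hA : 1 < A) (v : ℝ → ℝ)
    (hv0 : ∀ x ∈ Icc (0:ℝ) 1, 0 ≤ v x)
    (hmono : ∀ x₁ ∈ Icc (0:ℝ) 1, ∀ x₂ ∈ Icc (0:ℝ) 1, x₁ ≤ x₂ → v x₁ ≤ v x₂)
    (hg : ∀ x₁ ∈ Icc (0:ℝ) 1, ∀ x₂ ∈ Icc (0:ℝ) 1, x₁ ≤ x₂ →
        v x₁ ^ 2 - 2 * F₁ * x₁ ≤ v x₂ ^ 2 - 2 * F₁ * x₂) :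
    noCollisionsFree F₁ A v := by
  intro t ht x₁ hx₁ x₂ hx₂ hne
  rcases hne.lt_or_gt with h | h
  · exact (key_lt F₁ A hF₁ hA v hv0 hmono hg t ht x₁ hx₁ x₂ hx₂ h).ne
  · exact (key_lt F₁ A hF₁ hA v hv0 hmono hg t ht x₂ hx₂ x₁ hx₁ h).ne'

/-- One gap with `F₂ = 0`: for `F₁ > 0`, `A > 1` and `v ∈ C¹([0,1])`
nonnegative, the condition `v'(x) ≥ F₁/√(F₁x + v(0)²)` on `[0,1]` is sufficient for the
absence of collisions on `[0,∞)`, but it is not necessary. -/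
theorem step_force_free_sufficient_not_necessary
    (F₁ A : ℝ) (hF₁ : 0 < F₁) (hA : 1 < A) :
    (∀ v v' : ℝ → ℝ,
      (∀ x ∈ Icc (0:ℝ) 1, HasDerivWithinAt v (v' x) (Icc (0:ℝ) 1) x) →
      ContinuousOn v' (Icc (0:ℝ) 1) →
      (∀ x ∈ Icc (0:ℝ) 1, 0 ≤ v x) →
      (∀ x ∈ Icc (0:ℝ) 1, F₁ / Real.sqrt (F₁ * x + v 0 ^ 2) ≤ v' x) →
      noCollisionsFree F₁ A v) ∧
    ¬ (∀ v v' : ℝ → ℝ,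
      (∀ x ∈ Icc (0:ℝ) 1, HasDerivWithinAt v (v' x) (Icc (0:ℝ) 1) x) →
      ContinuousOn v' (Icc (0:ℝ) 1) →
      (∀ x ∈ Icc (0:ℝ) 1, 0 ≤ v x) →
      noCollisionsFree F₁ A v →
      (∀ x ∈ Icc (0:ℝ) 1, F₁ / Real.sqrt (F₁ * x + v 0 ^ 2) ≤ v' x)) := by
  constructor
  · intro v v' hder hcont hv0 hcond
    have h0 : (0:ℝ) ∈ Icc (0:ℝ) 1 := by constructor <;> norm_num
    have hv00 : 0 ≤ v 0 := hv0 0 h0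
    have hvcont : ContinuousOn v (Icc (0:ℝ) 1) := fun x hx =>
      (hder x hx).continuousWithinAt
    have hint : interior (Icc (0:ℝ) 1) = Ioo (0:ℝ) 1 := interior_Icc
    -- derivative within becomes honest derivative at interior points
    have hderAt : ∀ x ∈ Ioo (0:ℝ) 1, HasDerivAt v (v' x) x := by
      intro x hx
      exact (hder x (Ioo_subset_Icc_self hx)).hasDerivAt
        (Icc_mem_nhds hx.1 hx.2)
    -- positivity of the argument of the square root on Ioo
    have hqpos : ∀ x ∈ Ioo (0:ℝ) 1, 0 < F₁ * x + v 0 ^ 2 := by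
      intro x hx
      nlinarith [sq_nonneg (v 0), hx.1]
    -- v' is nonneg on Icc
    have hv'0 : ∀ x ∈ Icc (0:ℝ) 1, 0 ≤ v' x := by
      intro x hx
      exact le_trans (div_nonneg hF₁.le (Real.sqrt_nonneg _)) (hcond x hx)
    -- v is monotone on Icc
    have hmono : MonotoneOn v (Icc (0:ℝ) 1) := by
      apply monotoneOn_of_deriv_nonneg (convex_Icc 0 1) hvcont
      · rw [hint]
        exact fun x hx => (hderAt x hx).differentiableAt.differentiableWithinAt
      · rw [hint]
        intro x hx
        rw [(hderAt x hx).deriv]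
        exact hv'0 x (Ioo_subset_Icc_self hx)
    -- the comparison function u = v - 2√(F₁ x + v0²) is monotone on Icc
    set s : ℝ → ℝ := fun x => Real.sqrt (F₁ * x + v 0 ^ 2) with hs
    have hscont : ContinuousOn s (Icc (0:ℝ) 1) :=
      (Real.continuous_sqrt.comp (by fun_prop)).continuousOn
    have hsder : ∀ x ∈ Ioo (0:ℝ) 1, HasDerivAt s (F₁ / (2 * s x)) x := by
      intro x hx
      have harg : HasDerivAt (fun y => F₁ * y + v 0 ^ 2) F₁ x := by
        simpa using ((hasDerivAt_id x).const_mul F₁).add_const (v 0 ^ 2)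
      have := harg.sqrt (ne_of_gt (hqpos x hx))
      simpa [hs] using this
    have humono : MonotoneOn (fun x => v x - 2 * s x) (Icc (0:ℝ) 1) := by
      apply monotoneOn_of_deriv_nonneg (convex_Icc 0 1)
        (hvcont.sub (continuousOn_const.mul hscont))
      · rw [hint]
        intro x hx
        exact ((hderAt x hx).sub ((hsder x hx).const_mul 2)).differentiableAt.differentiableWithinAt
      · rw [hint]
        intro x hx
        have hd : HasDerivAt (fun x => v x - 2 * s x) (v' x - 2 * (F₁ / (2 * s x))) x :=
          (hderAt x hx).sub ((hsder x hx).const_mul 2)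
        show 0 ≤ deriv (fun x => v x - 2 * s x) x
        rw [hd.deriv]
        have hsx : 0 < s x := Real.sqrt_pos.2 (hqpos x hx)
        have : 2 * (F₁ / (2 * s x)) = F₁ / s x := by
          field_simp
        rw [this]
        have := hcond x (Ioo_subset_Icc_self hx)
        linarith
    -- hence v x ≥ 2 s x - v 0 on Icc
    have hvs : ∀ x ∈ Icc (0:ℝ) 1, s x ≤ v x := by
      intro x hx
      have h1 : v 0 - 2 * s 0 ≤ v x - 2 * s x := humono h0 hx hx.1
      have hs0 : s 0 = v 0 := by
        simp only [hs]
        rw [mul_zero, zero_add, Real.sqrt_sq hv00]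
      have hsv0 : v 0 ≤ s x := by
        rw [← hs0]
        apply Real.sqrt_le_sqrt
        nlinarith [hx.1]
      -- h1 : v 0 - 2 s 0 ≤ v x - 2 s x
      rw [hs0] at h1
      linarith
    -- monotonicity of g = v² - 2 F₁ x
    have hgmono : MonotoneOn (fun x => v x ^ 2 - 2 * F₁ * x) (Icc (0:ℝ) 1) := by
      apply monotoneOn_of_deriv_nonneg (convex_Icc 0 1)
      · exact ((hvcont.pow 2).sub (continuous_const.mul continuous_id).continuousOn)
      · rw [hint]
        intro x hx
        have hd : HasDerivAt (fun x => v x ^ 2 - 2 * F₁ * x)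
            ((2 : ℕ) * v x ^ 1 * v' x - 2 * F₁) x := by
          have := ((hderAt x hx).pow 2)
          exact (this.sub ((hasDerivAt_id x).const_mul (2 * F₁))).congr_deriv (by norm_num)
        exact hd.differentiableAt.differentiableWithinAt
      · rw [hint]
        intro x hx
        have hd : HasDerivAt (fun x => v x ^ 2 - 2 * F₁ * x)
            ((2 : ℕ) * v x ^ 1 * v' x - 2 * F₁) x := by
          have := ((hderAt x hx).pow 2)
          exact (this.sub ((hasDerivAt_id x).const_mul (2 * F₁))).congr_deriv (by norm_num)
        rw [hd.deriv]
        have hsx : 0 < s x := Real.sqrt_pos.2 (hqpos x hx)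
        have h1 := hvs x (Ioo_subset_Icc_self hx)
        have h2 := hcond x (Ioo_subset_Icc_self hx)
        have h3 : F₁ ≤ v' x * s x := by
          rwa [div_le_iff₀ hsx] at h2
        have h4 := hv'0 x (Ioo_subset_Icc_self hx)
        simp only [pow_one, Nat.cast_ofNat]
        nlinarith [mul_le_mul_of_nonneg_right h1 h4]
    exact core F₁ A hF₁ hA v hv0 (fun a ha b hb hab => hmono ha hb hab)
      (fun a ha b hb hab => hgmono ha hb hab)
  · intro H
    set v : ℝ → ℝ := fun x => Real.sqrt (1 + 2 * F₁ * x) with hv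
    set v' : ℝ → ℝ := fun x => F₁ / Real.sqrt (1 + 2 * F₁ * x) with hv'
    have hqpos : ∀ x ∈ Icc (0:ℝ) 1, 0 < 1 + 2 * F₁ * x := by
      intro x hx; nlinarith [hx.1]
    have hder : ∀ x ∈ Icc (0:ℝ) 1, HasDerivWithinAt v (v' x) (Icc (0:ℝ) 1) x := by
      intro x hx
      have harg : HasDerivAt (fun y => 1 + 2 * F₁ * y) (2 * F₁) x := by
        simpa using ((hasDerivAt_id x).const_mul (2 * F₁)).const_add 1
      have h2 := harg.sqrt (ne_of_gt (hqpos x hx))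
      have : (2 * F₁) / (2 * Real.sqrt (1 + 2 * F₁ * x)) = v' x := by
        rw [hv']
        rw [mul_div_mul_left _ _ (two_ne_zero)]
      rw [this] at h2
      exact h2.hasDerivWithinAt
    have hcont : ContinuousOn v' (Icc (0:ℝ) 1) := by
      apply ContinuousOn.div continuousOn_const
        ((Real.continuous_sqrt.comp (by fun_prop)).continuousOn)
      intro x hx
      exact ne_of_gt (Real.sqrt_pos.2 (hqpos x hx))
    have hv0 : ∀ x ∈ Icc (0:ℝ) 1, 0 ≤ v x := fun x _ => Real.sqrt_nonneg _
    have hnc : noCollisionsFree F₁ A v := by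
      apply core F₁ A hF₁ hA v hv0
      · intro x₁ hx₁ x₂ hx₂ h
        apply Real.sqrt_le_sqrt
        nlinarith
      · intro x₁ hx₁ x₂ hx₂ h
        have e1 : v x₁ ^ 2 = 1 + 2 * F₁ * x₁ := Real.sq_sqrt (hqpos x₁ hx₁).le
        have e2 : v x₂ ^ 2 = 1 + 2 * F₁ * x₂ := Real.sq_sqrt (hqpos x₂ hx₂).le
        rw [e1, e2]; ring_nf; exact le_refl _
    have h1 : (1:ℝ) ∈ Icc (0:ℝ) 1 := by constructor <;> norm_num
    have hkey := H v v' hder hcont hv0 hnc 1 h1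
    have hv01 : v 0 = 1 := by simp [hv]
    rw [hv01] at hkey
    have e1 : v' 1 = F₁ / Real.sqrt (1 + 2 * F₁) := by simp [hv']
    rw [e1] at hkey
    have hlt : Real.sqrt (F₁ * 1 + 1 ^ 2) < Real.sqrt (1 + 2 * F₁) := by
      apply Real.sqrt_lt_sqrt (by nlinarith)
      nlinarith
    have hpos : 0 < Real.sqrt (F₁ * 1 + 1 ^ 2) := Real.sqrt_pos.2 (by nlinarith)
    have := div_lt_div_of_pos_left hF₁ hpos hlt
    linarith
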